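/- arXiv:1510.08488 — 4 statements merged into one kernel-verified Lean document; each statement's English description precedes it below -/
import Mathlib

section
/- Let n ≥ 6 be even and let G be a graph of order 5n/2 − 1 containing no W_n whose complement contains no S_n. Then the clique number of the complement of G is at most n − 2. -/
open SimpleGraph

/-- `H` contains a copy of `G` (a subgraph isomorphic to `G`). -/
def Contains {α β : Type*} (H : SimpleGraph α) (G : SimpleGraph β) : Prop :=
  ∃ f : β ↪ α, ∀ u v, G.Adj u v → H.Adj (f u) (f v)

/-- Every graph on `N` vertices contains `G` or its complement contains `H`. -/
def RamseyProp {α β : Type*} (G : SimpleGraph α) (H : SimpleGraph β) (N : ℕ) : Prop :=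
  ∀ K : SimpleGraph (Fin N), Contains K G ∨ Contains Kᶜ H

/-- The Ramsey number of `G` versus `H`. -/
noncomputable def ramseyNumber {α β : Type*} (G : SimpleGraph α) (H : SimpleGraph β) : ℕ :=
  sInf {N | RamseyProp G H N}

/-- The wheel `W_n = C_n + K_1`: a cycle `C_n` plus a hub adjacent to all cycle vertices. -/
def wheelGraph (n : ℕ) : SimpleGraph (Option (Fin n)) :=
  SimpleGraph.fromRel
    (fun u v => u = none ∨ ∃ a b, u = some a ∧ v = some b ∧ (SimpleGraph.cycleGraph n).Adj a b)

/-- The star `S_n = K_{1,n-1}` on `n` vertices. -/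
def starGraph (n : ℕ) : SimpleGraph (Fin 1 ⊕ Fin (n - 1)) :=
  completeBipartiteGraph (Fin 1) (Fin (n - 1))

/-- `G` has a cycle of length `ℓ`. -/
def HasCycleLength {α : Type*} (G : SimpleGraph α) (ℓ : ℕ) : Prop :=
  ∃ (v : α) (c : G.Walk v v), c.IsCycle ∧ c.length = ℓ

/-- Circumference: the length of a longest cycle of `G`. -/
noncomputable def circumference {α : Type*} (G : SimpleGraph α) : ℕ :=
  sSup {ℓ | HasCycleLength G ℓ}

/-- `G` is 2-connected: at least 3 vertices and deleting any vertex leaves a connected graph. -/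
def TwoConnected {α : Type*} (G : SimpleGraph α) : Prop :=
  3 ≤ Nat.card α ∧ ∀ v : α, (G.induce {w | w ≠ v}).Connected

/-!
Since `Gᶜ` contains no `S_n`, every vertex has at most `n - 2` non-neighbours, so an
`(n - 1)`-clique `s` of `Gᶜ` sends no edge of `Gᶜ` out of itself: in `G`, `s` is completely
joined to the `3n/2` remaining vertices. A vertex `h` outside `s` has at most `n - 2`
non-neighbours, hence at least `n/2` neighbours outside `s`. These, together with `n/2`
vertices of `s`, span a `K_{n/2,n/2}` inside the neighbourhood of `h`; it contains the even
cycle `C_n`, which with the hub `h` is a `W_n` in `G`.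
-/

open Finset

namespace SimpleGraph

variable {V : Type*} {G : SimpleGraph V}

theorem contains_iff_isContained {W : Type*} {H : SimpleGraph W} : Contains G H ↔ H ⊑ G :=
  ⟨fun ⟨f, hf⟩ ↦ ⟨⟨⟨f, hf _ _⟩, f.injective⟩⟩,
    fun ⟨c⟩ ↦ ⟨c.toEmbedding, fun _ _ h ↦ c.toHom.map_adj h⟩⟩

theorem starGraph_isContained_of_le_degree {n : ℕ} {v : V} [Fintype (G.neighborSet v)]
    (h : n - 1 ≤ G.degree v) : _root_.starGraph n ⊑ G := by
  classical
  obtain ⟨T, hT, hTcard⟩ := exists_subset_card_eq h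
  refine completeBipartiteGraph_isContained_iff.2 ⟨{v}, T, by simp, by simpa using hTcard, ?_⟩
  rintro _ hv w hw
  rw [coe_singleton, Set.mem_singleton_iff] at hv
  exact hv ▸ (mem_neighborFinset G v w).1 (hT hw)

theorem degree_le_of_not_starGraph_isContained {n : ℕ} (h : ¬_root_.starGraph n ⊑ G) (v : V)
    [Fintype (G.neighborSet v)] : G.degree v ≤ n - 2 := by
  by_contra! hv
  exact h (starGraph_isContained_of_le_degree (v := v) (by omega))

theorem cycleGraph_isContained_completeBipartiteGraph {n : ℕ} (hn : Even n) :
    cycleGraph n ⊑ completeBipartiteGraph (Fin (n / 2)) (Fin (n / 2)) := by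
  have half_lt (i : Fin n) : i.val / 2 < n / 2 := by obtain ⟨k, rfl⟩ := hn; omega
  let f (i : Fin n) : Fin (n / 2) ⊕ Fin (n / 2) :=
    if i.val % 2 = 0 then .inl ⟨i / 2, half_lt i⟩ else .inr ⟨i / 2, half_lt i⟩
  refine ⟨⟨⟨f, fun {i j} hij ↦ ?_⟩, fun i j hij ↦ ?_⟩⟩
  · have hpar := (cycleGraph.bicoloring_of_even n hn).valid hij
    simp only [cycleGraph.bicoloring_of_even, Coloring.mk, RelHom.coeFn_mk, ne_eq,
      decide_eq_decide] at hpar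
    simp only [f]
    split_ifs <;> simp_all
  · change f i = f j at hij
    apply Fin.ext
    simp only [f] at hij
    split_ifs at hij <;> simp only [Sum.inl.injEq, Sum.inr.injEq, Fin.mk.injEq] at hij
    all_goals omega

theorem wheelGraph_isContained_of_isContained_induce {n : ℕ} (v : V)
    (h : cycleGraph n ⊑ G.induce (G.neighborSet v)) : wheelGraph n ⊑ G := by
  obtain ⟨c⟩ := h
  let f : Option (Fin n) ↪ V :=
    (c.toEmbedding.trans (Function.Embedding.subtype _)).optionElim v fun ⟨i, hi⟩ ↦
      G.ne_of_adj (c i).2 hi.symm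
  have hub (i : Fin n) : G.Adj (f none) (f (some i)) := (c i).2
  have rim {i j : Fin n} (h : (cycleGraph n).Adj i j) : G.Adj (f (some i)) (f (some j)) :=
    c.toHom.map_adj h
  refine ⟨⟨⟨f, fun {x y} hxy ↦ ?_⟩, f.injective⟩⟩
  rw [wheelGraph, fromRel_adj] at hxy
  obtain ⟨hne, (rfl | ⟨i, j, rfl, rfl, hij⟩) | (rfl | ⟨i, j, rfl, rfl, hij⟩)⟩ := hxy
  · obtain _ | j := y
    exacts [absurd rfl hne, hub j]
  · exact rim hij
  · obtain _ | i := x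
    exacts [absurd rfl hne, (hub i).symm]
  · exact (rim hij).symm

theorem IsClique.not_adj_of_degree_lt_card [DecidableEq V] {s : Finset V} (hs : G.IsClique s)
    {v w : V} (hv : v ∈ s) (hw : w ∉ s) [Fintype (G.neighborSet v)] (hdeg : G.degree v < #s) :
    ¬G.Adj v w := by
  intro hvw
  have hsub : s.erase v ⊆ G.neighborFinset v := fun x hx ↦
    (mem_neighborFinset G v x).2 (hs hv (mem_of_mem_erase hx) (ne_of_mem_erase hx).symm)
  have hlt := card_lt_card <| (ssubset_iff_of_subset hsub).2
    ⟨w, (mem_neighborFinset G v w).2 hvw, fun h ↦ hw (mem_of_mem_erase h)⟩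
  rw [card_erase_of_mem hv, card_neighborFinset_eq_degree] at hlt
  omega

theorem isCompleteBetween_of_isClique_compl [DecidableEq V] {s : Finset V} (hs : Gᶜ.IsClique s)
    [∀ v, Fintype (Gᶜ.neighborSet v)] (hdeg : ∀ v ∈ s, Gᶜ.degree v < #s) :
    G.IsCompleteBetween s (↑s)ᶜ := by
  intro v hv w hw
  by_contra hvw
  exact hs.not_adj_of_degree_lt_card hv hw (hdeg v hv)
    ((compl_adj G v w).2 ⟨fun h ↦ hw (h ▸ hv), hvw⟩)

theorem wheelGraph_isContained_of_isCompleteBetween {n : ℕ} (hn : Even n) {v : V}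
    {A B : Finset V} (hA : #A = n / 2) (hB : #B = n / 2) (hvA : ↑A ⊆ G.neighborSet v)
    (hvB : ↑B ⊆ G.neighborSet v) (hAB : G.IsCompleteBetween A B) : wheelGraph n ⊑ G := by
  classical
  refine wheelGraph_isContained_of_isContained_induce v <|
    (cycleGraph_isContained_completeBipartiteGraph hn).trans <|
      completeBipartiteGraph_isContained_iff.2
        ⟨A.subtype (· ∈ G.neighborSet v), B.subtype (· ∈ G.neighborSet v), ?_, ?_, ?_⟩
  · rw [card_subtype, filter_true_of_mem fun _ ha ↦ hvA ha, hA, Fintype.card_fin]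
  · rw [card_subtype, filter_true_of_mem fun _ hb ↦ hvB hb, hB, Fintype.card_fin]
  · exact fun x hx y hy ↦ hAB (mem_subtype.1 hx) (mem_subtype.1 hy)

end SimpleGraph

/-- Under the standing hypotheses, ω(Gᶜ) ≤ n − 2. -/
theorem stmt8 {V : Type*} [Fintype V] (G : SimpleGraph V)
    (n : ℕ) (hn : 6 ≤ n) (he : Even n)
    (hcard : Fintype.card V = 5 * n / 2 - 1)
    (hW : ¬ Contains G (wheelGraph n))
    (hS : ¬ Contains Gᶜ (_root_.starGraph n)) :
    Gᶜ.cliqueNum ≤ n - 2 := by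
  classical
  rw [contains_iff_isContained] at hW hS
  have hdeg (v : V) : Gᶜ.degree v ≤ n - 2 := degree_le_of_not_starGraph_isContained hS v
  obtain ⟨k, rfl⟩ := he
  by_contra! hω
  obtain ⟨s, hs⟩ : ∃ s, Gᶜ.IsNClique (k + k - 1) s := by
    obtain ⟨t, ht⟩ := Gᶜ.exists_isNClique_cliqueNum
    obtain ⟨s, hst, hs⟩ := exists_subset_card_eq (show k + k - 1 ≤ #t by rw [ht.card_eq]; omega)
    exact ⟨s, ht.isClique.subset hst, hs⟩
  have hsep : G.IsCompleteBetween s (↑s)ᶜ :=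
    isCompleteBetween_of_isClique_compl hs.isClique fun v _ ↦
      (hdeg v).trans_lt (by rw [hs.card_eq]; omega)
  obtain ⟨h, -, hh⟩ := exists_mem_notMem_of_card_lt_card (s := s) (t := univ)
    (by rw [card_univ, hs.card_eq]; omega)
  have hnbrs : (k + k) / 2 ≤ #(G.neighborFinset h \ s) := by
    have := le_card_sdiff s (G.neighborFinset h)
    have := G.degree_compl (v := h)
    grind [card_neighborFinset_eq_degree, hs.card_eq, hdeg h]
  obtain ⟨A, hAs, hA⟩ := exists_subset_card_eq (show (k + k) / 2 ≤ #s by rw [hs.card_eq]; omega)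
  obtain ⟨B, hBs, hB⟩ := exists_subset_card_eq hnbrs
  refine hW (wheelGraph_isContained_of_isCompleteBetween ⟨k, rfl⟩ hA hB
    (fun a ha ↦ (hsep (hAs ha) hh).symm) (fun b hb ↦ ?_) fun a ha b hb ↦ hsep (hAs ha) ?_)
  · exact (mem_neighborFinset G h b).1 (mem_sdiff.1 (hBs hb)).1
  · exact (mem_sdiff.1 (hBs hb)).2
end

section
/- Let n ≥ 6 be even and let G be a graph of order 5n/2 − 1 containing no W_n whose complement contains no S_n. Then for every vertex v of G, the induced subgraph H_v = G[N(v)] is not bipartite. -/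
open SimpleGraph

/-!
Write `n = 2k`. As `Gᶜ` has no `S_n`, every vertex has at most `2k - 2` non-neighbours, so
`deg v ≥ 3k`. Suppose `N(v) = A ∪ B` with `A`, `B` independent. A vertex of `A` is then
non-adjacent to the rest of `A`, so `|A| ≤ 2k - 1` and it misses at most `2k - 1 - |A|` vertices
of `B`; symmetrically for `B`. Since `|A| + |B| ≥ 3k`, every vertex sees at least `k` vertices of
the other side, and a greedy alternating path `a₀ b₀ a₁ b₁ … a_{k-1} b_{k-1}` exists. Counting the
vertices missed by `b_{k-1}` and by `a₀` gives an `i < k - 1` with `a_i ~ b_{k-1}` and `b_i ~ a₀`,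
and a Pósa rotation turns the path into a cycle `C_{2k}` inside `N(v)`: with `v` it is a `W_n`.
-/

open Finset

lemma degree_add_one_lt_of_not_contains_starGraph {V : Type*} {K : SimpleGraph V} {n : ℕ}
    (hS : ¬ Contains K (_root_.starGraph n)) (u : V) [Fintype (K.neighborSet u)] :
    K.degree u + 1 < n := by
  by_contra! h
  obtain ⟨T, hTu, hT⟩ := exists_subset_card_eq (s := K.neighborFinset u) (n := n - 1)
    (by rw [card_neighborFinset_eq_degree]; omega)
  let e := T.equivFinOfCardEq hT
  have hadj (i : Fin (n - 1)) : K.Adj u (e.symm i) := by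
    simpa using hTu (e.symm i).2
  refine hS ⟨⟨Sum.elim (fun _ => u) (fun i => e.symm i), ?_⟩, ?_⟩
  · exact Function.Injective.sumElim (fun _ _ _ => Subsingleton.elim _ _)
      (Subtype.val_injective.comp e.symm.injective) fun _ i => (hadj i).ne
  · rintro (_ | i) (_ | j) h
    · simp [_root_.starGraph] at h
    · exact hadj j
    · exact (hadj i).symm
    · simp [_root_.starGraph] at h

lemma contains_wheelGraph_of_isContained_induce_neighborSet {V : Type*} {G : SimpleGraph V}
    {v : V} {n : ℕ} (h : cycleGraph n ⊑ G.induce (G.neighborSet v)) :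
    Contains G (wheelGraph n) := by
  obtain ⟨f⟩ := h
  have hv (i : Fin n) : G.Adj v (f i) := (f i).2
  have hf {i j : Fin n} (hij : (cycleGraph n).Adj i j) : G.Adj (f i) (f j) := f.toHom.map_adj hij
  refine ⟨⟨fun o => o.elim v (fun i => f i), ?_⟩, ?_⟩
  · rintro (_ | i) (_ | j) hij <;> simp only [Option.elim] at hij
    · rfl
    · exact absurd hij (hv j).ne
    · exact absurd hij.symm (hv i).ne
    · exact congrArg some (f.injective (Subtype.ext hij))
  · rintro (_ | i) (_ | j) ⟨hne, hij⟩
    · exact absurd rfl hne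
    · exact hv j
    · exact (hv i).symm
    · simp only [reduceCtorEq, false_or, Option.some.injEq, exists_and_left,
        exists_eq_left'] at hij
      exact hf (hij.elim id Adj.symm)

lemma degree_compl_induce_le {V : Type*} {G : SimpleGraph V} (s : Set V) (x : s)
    [Fintype ((G.induce s)ᶜ.neighborSet x)] [Fintype (Gᶜ.neighborSet x)] :
    (G.induce s)ᶜ.degree x ≤ Gᶜ.degree x :=
  Copy.degree_le (Hom.toCopy (⟨Subtype.val, fun h => (compl_adj _ _ _).mpr
    ⟨Subtype.coe_injective.ne h.1, h.2⟩⟩ : (G.induce s)ᶜ →g Gᶜ) Subtype.val_injective) x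

structure IsPathSeq {W : Type*} (H : SimpleGraph W) (n : ℕ) (x : ℕ → W) : Prop where
  injOn : Set.InjOn x (Set.Iio n)
  adj : ∀ t, t + 1 < n → H.Adj (x t) (x (t + 1))

namespace IsPathSeq

variable {W : Type*} {H : SimpleGraph W} {n : ℕ} {x : ℕ → W}

lemma cycleGraph_isContained (h : IsPathSeq H n x) (hclose : H.Adj (x (n - 1)) (x 0)) :
    cycleGraph n ⊑ H := by
  have key (i j : Fin n) (hij : (j - i).val = 1) : H.Adj (x i) (x j) := by
    rcases le_or_gt i j with hle | hlt
    · rw [Fin.coe_sub_iff_le.mpr hle] at hij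
      rw [show (j : ℕ) = i + 1 by omega]
      exact h.adj i (by omega)
    · rw [Fin.coe_sub_iff_lt.mpr hlt] at hij
      rw [show (i : ℕ) = n - 1 by omega, show (j : ℕ) = 0 by omega]
      exact hclose
  refine ⟨⟨⟨fun i => x i, fun {i j} hij => ?_⟩, fun i j hij => Fin.ext (h.injOn i.2 j.2 hij)⟩⟩
  rcases cycleGraph_adj'.mp hij with hij | hij
  · exact (key j i hij).symm
  · exact key i j hij

/-- Pósa rotation: the cycle is `x 0, …, x j, x (n - 1), x (n - 2), …, x (j + 1)`. -/
lemma cycleGraph_isContained_of_adj_of_adj (h : IsPathSeq H n x) {j : ℕ} (hj : j + 1 < n)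
    (hlast : H.Adj (x j) (x (n - 1))) (hfirst : H.Adj (x (j + 1)) (x 0)) :
    cycleGraph n ⊑ H := by
  set σ : ℕ → ℕ := fun t => if t ≤ j then t else n + j - t
  have hσ : ∀ t < n, σ t < n ∧ ∀ s < n, σ s = σ t → s = t := by
    intro t ht
    refine ⟨by simp only [σ]; split_ifs <;> omega, fun s hs hst => ?_⟩
    simp only [σ] at hst; split_ifs at hst <;> omega
  refine cycleGraph_isContained (x := x ∘ σ) ⟨fun s hs t ht hst => ?_, fun t ht => ?_⟩ ?_
  · exact (hσ t ht).2 s hs (h.injOn (hσ s hs).1 (hσ t ht).1 hst)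
  · simp only [Function.comp, σ]
    rcases lt_trichotomy t j with htj | rfl | htj
    · rw [if_pos htj.le, if_pos (by omega)]
      exact h.adj t (by omega)
    · rwa [if_pos le_rfl, if_neg (by omega), show n + t - (t + 1) = n - 1 by omega]
    · rw [if_neg (by omega), if_neg (by omega), show n + j - t = n + j - (t + 1) + 1 by omega]
      exact (h.adj _ (by omega)).symm
  · simp only [Function.comp, σ]
    rwa [if_neg (by omega), if_pos (Nat.zero_le _), show n + j - (n - 1) = j + 1 by omega]

end IsPathSeq

lemma Set.InjOn.update_Iio {α : Type*} [DecidableEq α] {f : ℕ → α} {m : ℕ} {y : α}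
    (hf : Set.InjOn f (Set.Iio m)) (hy : y ∉ (Finset.range m).image f) :
    Set.InjOn (Function.update f m y) (Set.Iio (m + 1)) := by
  intro i hi j hj hij
  simp only [Set.mem_Iio] at hi hj
  simp only [Function.update_apply] at hij
  split_ifs at hij
  · omega
  · exact absurd (hij ▸ Finset.mem_image_of_mem f (Finset.mem_range.mpr (by omega))) hy
  · exact absurd (hij ▸ Finset.mem_image_of_mem f (Finset.mem_range.mpr (by omega))) hy
  · exact hf (Set.mem_Iio.mpr (by omega)) (Set.mem_Iio.mpr (by omega)) hij

section Bipartite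

variable {W : Type*}

/-- The path `a 0, b 0, a 1, b 1, …, a (m - 1), b (m - 1)`. -/
structure IsAltPath (H : SimpleGraph W) (A B : Finset W) (m : ℕ) (a b : ℕ → W) : Prop where
  mem_left : ∀ i < m, a i ∈ A
  mem_right : ∀ i < m, b i ∈ B
  injOn_left : Set.InjOn a (Set.Iio m)
  injOn_right : Set.InjOn b (Set.Iio m)
  adj_right : ∀ i < m, H.Adj (a i) (b i)
  adj_left : ∀ i, i + 1 < m → H.Adj (b i) (a (i + 1))

variable {H : SimpleGraph W} {A B : Finset W}

lemma exists_isAltPath [DecidableEq W] [DecidableRel H.Adj] {k : ℕ} (hA : A.Nonempty)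
    (hAdeg : ∀ x ∈ A, k ≤ #{y ∈ B | H.Adj x y}) (hBdeg : ∀ y ∈ B, k ≤ #{x ∈ A | H.Adj y x}) :
    ∃ a b, IsAltPath H A B k a b := by
  suffices ∀ m ≤ k, ∃ a b, IsAltPath H A B m a b from this k le_rfl
  intro m
  induction m with
  | zero =>
    obtain ⟨x, -⟩ := hA
    exact fun _ => ⟨fun _ => x, fun _ => x, by constructor <;> simp⟩
  | succ m ih =>
    intro hm
    obtain ⟨a, b, h⟩ := ih (by omega)
    have hused (f : ℕ → W) : #((range m).image f) < k :=
      (card_image_le.trans (card_range m).le).trans_lt hm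
    obtain ⟨x, hxA, hx_adj, hx_new⟩ :
        ∃ x ∈ A, (∀ i, i + 1 = m → H.Adj (b i) x) ∧ x ∉ (range m).image a := by
      rcases m with _ | m
      · obtain ⟨x, hx⟩ := hA
        exact ⟨x, hx, by omega, by simp⟩
      · obtain ⟨x, hx, hx_new⟩ := exists_mem_notMem_of_card_lt_card
          ((hused a).trans_le (hBdeg _ (h.mem_right m (by omega))))
        rw [mem_filter] at hx
        exact ⟨x, hx.1, fun i hi => by rw [show i = m by omega]; exact hx.2, hx_new⟩
    obtain ⟨y, hy, hy_new⟩ := exists_mem_notMem_of_card_lt_card ((hused b).trans_le (hAdeg x hxA))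
    rw [mem_filter] at hy
    refine ⟨Function.update a m x, Function.update b m y,
      ⟨fun i hi => ?_, fun i hi => ?_, h.injOn_left.update_Iio hx_new,
        h.injOn_right.update_Iio hy_new, fun i hi => ?_, fun i hi => ?_⟩⟩ <;>
      simp only [Function.update_apply]
    · split_ifs
      exacts [hxA, h.mem_left i (by omega)]
    · split_ifs
      exacts [hy.1, h.mem_right i (by omega)]
    · split_ifs
      exacts [hy.2, h.adj_right i (by omega)]
    · split_ifs
      exacts [by omega, by omega, hx_adj i ‹_›, h.adj_left i (by omega)]

lemma IsAltPath.exists_crossing [DecidableRel H.Adj] {k : ℕ} {a b : ℕ → W}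
    (h : IsAltPath H A B k a b) {α β : ℕ}
    (hA : ∀ x ∈ A, #{y ∈ B | ¬H.Adj x y} ≤ α) (hB : ∀ y ∈ B, #{x ∈ A | ¬H.Adj y x} ≤ β)
    (hk : α + β + 2 ≤ k) :
    ∃ i, i + 1 < k ∧ H.Adj (a i) (b (k - 1)) ∧ H.Adj (b i) (a 0) := by
  by_contra! hcross
  have hsub {p : ℕ → Prop} [DecidablePred p] :
      ((range (k - 1)).filter p : Set ℕ) ⊆ Set.Iio k := fun i hi => by
    simp only [coe_filter, mem_range, Set.mem_ofPred_eq, Set.mem_Iio] at hi ⊢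
    omega
  have hmiss_last : #{i ∈ range (k - 1) | ¬H.Adj (b (k - 1)) (a i)} ≤ β := by
    refine (card_le_card_of_injOn a (fun i hi => ?_) (h.injOn_left.mono hsub)).trans
      (hB _ (h.mem_right (k - 1) (by omega)))
    simp only [coe_filter, mem_range, Set.mem_ofPred_eq] at hi ⊢
    exact ⟨h.mem_left i (by omega), hi.2⟩
  have hmiss_first : #{i ∈ range (k - 1) | ¬H.Adj (a 0) (b i)} ≤ α := by
    refine (card_le_card_of_injOn b (fun i hi => ?_) (h.injOn_right.mono hsub)).trans
      (hA _ (h.mem_left 0 (by omega)))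
    simp only [coe_filter, mem_range, Set.mem_ofPred_eq] at hi ⊢
    exact ⟨h.mem_right i (by omega), hi.2⟩
  have hcover : range (k - 1) ⊆ {i ∈ range (k - 1) | ¬H.Adj (b (k - 1)) (a i)} ∪
      {i ∈ range (k - 1) | ¬H.Adj (a 0) (b i)} := by
    intro i hi
    simp only [mem_union, mem_filter, mem_range] at hi ⊢
    by_contra! hc
    exact hcross i (by omega) (hc.1 hi).symm (hc.2 hi).symm
  have := (card_le_card hcover).trans (card_union_le _ _)
  simp only [card_range] at this
  omega

def interleave (a b : ℕ → W) (t : ℕ) : W := if t % 2 = 0 then a (t / 2) else b (t / 2)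

@[simp] lemma interleave_two_mul (a b : ℕ → W) (i : ℕ) : interleave a b (2 * i) = a i := by
  simp [interleave]

@[simp] lemma interleave_two_mul_add_one (a b : ℕ → W) (i : ℕ) :
    interleave a b (2 * i + 1) = b i := by
  simp [interleave, Nat.add_mod, Nat.add_div]

lemma IsAltPath.isPathSeq_interleave {m : ℕ} {a b : ℕ → W} (h : IsAltPath H A B m a b)
    (hAB : Disjoint A B) : IsPathSeq H (2 * m) (interleave a b) := by
  have hA {i} (hi : 2 * i < 2 * m) : a i ∈ A := h.mem_left i (by omega)
  have hB {i} (hi : 2 * i + 1 < 2 * m) : b i ∈ B := h.mem_right i (by omega)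
  refine ⟨fun s hs t ht hst => ?_, fun t ht => ?_⟩
  · simp only [Set.mem_Iio] at hs ht
    obtain ⟨i, rfl | rfl⟩ := Nat.even_or_odd' s <;> obtain ⟨j, rfl | rfl⟩ := Nat.even_or_odd' t <;>
      simp only [interleave_two_mul, interleave_two_mul_add_one] at hst
    · rw [h.injOn_left (Set.mem_Iio.mpr (by omega)) (Set.mem_Iio.mpr (by omega)) hst]
    · exact absurd (hst ▸ hB ht) (disjoint_left.mp hAB (hA hs))
    · exact absurd (hst ▸ hA ht) (disjoint_right.mp hAB (hB hs))
    · rw [h.injOn_right (Set.mem_Iio.mpr (by omega)) (Set.mem_Iio.mpr (by omega)) hst]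
  · obtain ⟨i, rfl | rfl⟩ := Nat.even_or_odd' t
    · simpa using h.adj_right i (by omega)
    · simpa [show 2 * i + 1 + 1 = 2 * (i + 1) by ring] using h.adj_left i (by omega)

lemma cycleGraph_isContained_of_card_not_adj_le [DecidableEq W] [DecidableRel H.Adj]
    (hAB : Disjoint A B) {k α β : ℕ}
    (hA : ∀ x ∈ A, #{y ∈ B | ¬H.Adj x y} ≤ α) (hB : ∀ y ∈ B, #{x ∈ A | ¬H.Adj y x} ≤ β)
    (hkA : k + β ≤ #A) (hkB : k + α ≤ #B) (hk : α + β + 2 ≤ k) :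
    cycleGraph (2 * k) ⊑ H := by
  have hdeg {S T : Finset W} {γ : ℕ} (hS : ∀ x ∈ S, #{y ∈ T | ¬H.Adj x y} ≤ γ) (hT : k + γ ≤ #T)
      (x : W) (hx : x ∈ S) : k ≤ #{y ∈ T | H.Adj x y} := by
    have := card_filter_add_card_filter_not (s := T) (fun y => H.Adj x y)
    have := hS x hx
    omega
  obtain ⟨a, b, h⟩ := exists_isAltPath (card_pos.mp (by omega)) (hdeg hA hkB) (hdeg hB hkA)
  obtain ⟨i, hi, hlast, hfirst⟩ := h.exists_crossing hA hB hk
  refine (h.isPathSeq_interleave hAB).cycleGraph_isContained_of_adj_of_adj (j := 2 * i)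
    (by omega) ?_ ?_
  · rwa [show 2 * k - 1 = 2 * (k - 1) + 1 by omega, interleave_two_mul,
      interleave_two_mul_add_one]
  · rwa [interleave_two_mul_add_one, show interleave a b 0 = a 0 from interleave_two_mul a b 0]

lemma card_add_card_filter_not_adj_le [Fintype W] [DecidableEq W] [DecidableRel H.Adj]
    {S T : Finset W} (hS : H.IsIndepSet S) (hST : Disjoint S T) {x : W} (hx : x ∈ S) :
    #S + #{y ∈ T | ¬H.Adj x y} ≤ Hᶜ.degree x + 1 := by
  have hsub : S.erase x ∪ {y ∈ T | ¬H.Adj x y} ⊆ Hᶜ.neighborFinset x := by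
    intro y hy
    rw [mem_neighborFinset, compl_adj]
    rcases mem_union.mp hy with hy | hy
    · exact ⟨(ne_of_mem_erase hy).symm, hS hx (mem_of_mem_erase hy) (ne_of_mem_erase hy).symm⟩
    · rw [mem_filter] at hy
      exact ⟨fun hxy => disjoint_left.mp hST hx (hxy ▸ hy.1), hy.2⟩
  have hdisj : Disjoint (S.erase x) {y ∈ T | ¬H.Adj x y} :=
    disjoint_of_subset_left (erase_subset x S) (hST.mono_right (filter_subset _ _))
  have := card_le_card hsub
  rw [card_union_of_disjoint hdisj, card_erase_of_mem hx, card_neighborFinset_eq_degree] at this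
  have := card_pos.mpr ⟨x, hx⟩
  omega

lemma cycleGraph_isContained_of_colorable_two [Fintype W] [DecidableEq W] [DecidableRel H.Adj]
    {k : ℕ} (hcol : H.Colorable 2) (hcodeg : ∀ x, Hᶜ.degree x + 2 ≤ 2 * k)
    (hcard : 3 * k ≤ Fintype.card W) : cycleGraph (2 * k) ⊑ H := by
  obtain rfl | hk := k.eq_zero_or_pos
  · rw [mul_zero]
    exact .of_isEmpty
  obtain ⟨C⟩ := hcol
  have hindep (c : Fin 2) : H.IsIndepSet (({x | C x = c} : Finset W) : Set W) := by
    rw [coe_filter_univ]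
    exact C.isIndepSet_colorClass c
  have hB : ({x | ¬C x = 0} : Finset W) = ({x | C x = 1} : Finset W) :=
    filter_congr fun x _ => by generalize C x = c; revert c; decide
  have hAB := disjoint_filter_filter_not (univ : Finset W) univ (C · = 0)
  have hcardAB := card_filter_add_card_filter_not (s := (univ : Finset W)) (C · = 0)
  rw [hB] at hAB hcardAB
  rw [card_univ] at hcardAB
  set A : Finset W := {x | C x = 0}
  set B : Finset W := {x | C x = 1}
  have hmissA : ∀ x ∈ A, #A + #{y ∈ B | ¬H.Adj x y} + 1 ≤ 2 * k := fun x hx => by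
    have := card_add_card_filter_not_adj_le (S := A) (hindep 0) hAB hx
    have := hcodeg x
    omega
  have hmissB : ∀ x ∈ B, #B + #{y ∈ A | ¬H.Adj x y} + 1 ≤ 2 * k := fun x hx => by
    have := card_add_card_filter_not_adj_le (S := B) (hindep 1) hAB.symm hx
    have := hcodeg x
    omega
  have hAle : #A + 1 ≤ 2 * k := by
    rcases A.eq_empty_or_nonempty with hA | ⟨x, hx⟩
    · rw [hA, card_empty]; omega
    · have := hmissA x hx; omega
  have hBle : #B + 1 ≤ 2 * k := by
    rcases B.eq_empty_or_nonempty with hB | ⟨x, hx⟩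
    · rw [hB, card_empty]; omega
    · have := hmissB x hx; omega
  refine cycleGraph_isContained_of_card_not_adj_le hAB (α := 2 * k - 1 - #A)
    (β := 2 * k - 1 - #B) (fun x hx => ?_) (fun x hx => ?_) (by omega) (by omega) (by omega)
  · have := hmissA x hx; omega
  · have := hmissB x hx; omega

end Bipartite

theorem stmt10_general {V : Type*} [Fintype V] (G : SimpleGraph V)
    (n : ℕ) (he : Even n)
    (hcard : Fintype.card V = 5 * n / 2 - 1)
    (hW : ¬ Contains G (wheelGraph n))
    (hS : ¬ Contains Gᶜ (_root_.starGraph n)) :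
    ∀ v : V, ¬ (G.induce (G.neighborSet v)).Colorable 2 := by
  classical
  intro v hcol
  obtain ⟨k, rfl⟩ := he.two_dvd
  have hcodeg (u : V) : Gᶜ.degree u + 2 ≤ 2 * k := by
    have := degree_add_one_lt_of_not_contains_starGraph hS u
    omega
  have hdeg : 3 * k ≤ G.degree v := by
    have := G.degree_compl v
    have := hcodeg v
    omega
  refine hW (contains_wheelGraph_of_isContained_induce_neighborSet
    (cycleGraph_isContained_of_colorable_two hcol (fun x => ?_) ?_))
  · have := degree_compl_induce_le (G := G) _ x
    have := hcodeg x
    omega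
  · rwa [card_neighborSet_eq_degree]

/-- Under the standing hypotheses, no neighborhood subgraph G[N(v)] is bipartite. -/
theorem stmt10 {V : Type*} [Fintype V] (G : SimpleGraph V)
    (n : ℕ) (hn : 6 ≤ n) (he : Even n)
    (hcard : Fintype.card V = 5 * n / 2 - 1)
    (hW : ¬ Contains G (wheelGraph n))
    (hS : ¬ Contains Gᶜ (_root_.starGraph n)) :
    ∀ v : V, ¬ (G.induce (G.neighborSet v)).Colorable 2 :=
  stmt10_general G n he hcard hW hS
end

section
/- Let n ≥ 6 be even and let G be a graph of order 5n/2 − 1 containing no W_n whose complement contains no S_n. If for some vertex t the induced subgraph H_t = G[N(t)] is disconnected, then H_t has exactly two connected components. -/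
open SimpleGraph

/-! Since `Gᶜ` contains no `S_n`, every vertex has at most `n - 2` non-neighbours. Hence `t` has
degree at least `⌊3n/2⌋`, and inside `H_t` every vertex has degree at least `|H_t| - n + 1`, so each
component of `H_t` has more than `|H_t| - n + 1` vertices. Three components would force
`3 (|H_t| - n + 2) ≤ |H_t|`, i.e. `|H_t| ≤ 3n/2 - 3`, a contradiction. -/

open Finset

namespace SimpleGraph

variable {V : Type*} (G : SimpleGraph V)

theorem contains_starGraph_of_le_degree {n : ℕ} (v : V) [Fintype (G.neighborSet v)]
    (h : n - 1 ≤ G.degree v) : Contains G (_root_.starGraph n) := by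
  obtain ⟨e⟩ := Function.Embedding.nonempty_of_card_le (α := Fin (n - 1))
    (β := G.neighborSet v) (by simpa only [Fintype.card_fin, card_neighborSet_eq_degree] using h)
  refine ⟨⟨Sum.elim (fun _ => v) (fun i => e i), ?_⟩, ?_⟩
  · rintro (a | a) (b | b) hab
    · exact congrArg Sum.inl (Subsingleton.elim a b)
    · exact absurd hab (e b).2.ne
    · exact absurd hab.symm (e a).2.ne
    · exact congrArg Sum.inr (e.injective (Subtype.ext hab))
  · rintro (a | a) (b | b) hab <;> simp only [_root_.starGraph, completeBipartiteGraph_adj] at hab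
    · simp at hab
    · exact (e b).2
    · exact (e a).2.symm
    · simp at hab

theorem card_le_degree_induce_add_degree_compl [Fintype V] [DecidableEq V] [DecidableRel G.Adj]
    (s : Set V) [DecidablePred (· ∈ s)] (v : s) :
    Nat.card s ≤ (G.induce s).degree v + Gᶜ.degree v + 1 := by
  have hcompl : (G.induce s)ᶜ.degree v ≤ Gᶜ.degree v :=
    (Embedding.complEquiv (Embedding.induce s)).toCopy.degree_le v
  have := (G.induce s).degree_compl v
  have := (G.induce s).degree_lt_card_verts v
  rw [Nat.card_eq_fintype_card]
  omega

theorem degree_lt_card_supp_connectedComponentMk [Fintype V] [DecidableRel G.Adj] (v : V) :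
    G.degree v < Nat.card (G.connectedComponentMk v).supp := by
  classical
  calc G.degree v < #(insert v (G.neighborFinset v)) := by
        rw [card_insert_of_notMem (by simp)]
        exact Nat.lt_succ_self _
    _ ≤ #(G.connectedComponentMk v).supp.toFinset := card_le_card fun w hw => by
        rcases mem_insert.mp hw with rfl | hadj
        · simp
        · simpa using ConnectedComponent.sound ((G.mem_neighborFinset v w).mp hadj).symm.reachable
    _ = Nat.card (G.connectedComponentMk v).supp := (Nat.card_eq_card_toFinset _).symm

theorem card_connectedComponent_mul_le [Fintype V] [DecidableRel G.Adj]
    {d : ℕ} (hd : ∀ v, d ≤ G.degree v) :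
    Nat.card G.ConnectedComponent * (d + 1) ≤ Nat.card V := by
  have : Fintype G.ConnectedComponent := Fintype.ofFinite _
  calc Nat.card G.ConnectedComponent * (d + 1) = ∑ _ : G.ConnectedComponent, (d + 1) := by
        simp [Nat.card_eq_fintype_card]
    _ ≤ ∑ C : G.ConnectedComponent, Nat.card C.supp := sum_le_sum fun C _ => by
        induction C using ConnectedComponent.ind with
        | h v => exact (hd v).trans_lt (G.degree_lt_card_supp_connectedComponentMk v)
    _ = Nat.card V := by
        rw [← Nat.card_sigma]
        exact Nat.card_congr (Equiv.sigmaFiberEquiv G.connectedComponentMk)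

theorem one_lt_card_connectedComponent [Finite V] [Nonempty V] (h : ¬G.Connected) :
    1 < Nat.card G.ConnectedComponent := by
  by_contra! hle
  have := Finite.card_le_one_iff_subsingleton.mp hle
  exact h ⟨fun u v => ConnectedComponent.exact (Subsingleton.elim _ _)⟩

end SimpleGraph

theorem stmt11_general {V : Type*} [Fintype V] (G : SimpleGraph V)
    (n : ℕ)
    (hcard : Fintype.card V = 5 * n / 2 - 1)
    (hS : ¬ Contains Gᶜ (_root_.starGraph n))
    (t : V) (hdis : ¬ (G.induce (G.neighborSet t)).Connected) :
    Nat.card (G.induce (G.neighborSet t)).ConnectedComponent = 2 := by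
  classical
  have hcompl_deg (v : V) : Gᶜ.degree v < n - 1 :=
    lt_of_not_ge fun h => hS (Gᶜ.contains_starGraph_of_le_degree v h)
  have hN : Nat.card (G.neighborSet t) = G.degree t :=
    Nat.card_eq_fintype_card.trans (G.card_neighborSet_eq_degree t)
  have hdeg_t := G.degree_compl t
  have hcompl_deg_t := hcompl_deg t
  have hδ (v : G.neighborSet t) : G.degree t - n + 1 ≤ (G.induce (G.neighborSet t)).degree v := by
    have := G.card_le_degree_induce_add_degree_compl (G.neighborSet t) v
    have := hcompl_deg v
    omega
  have hupper := (G.induce (G.neighborSet t)).card_connectedComponent_mul_le hδ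
  have : Nonempty (G.neighborSet t) := (Nat.card_pos_iff.mp (by omega)).1
  have hlower := (G.induce (G.neighborSet t)).one_lt_card_connectedComponent hdis
  by_contra hne_two
  have := (Nat.mul_le_mul_right (G.degree t - n + 1 + 1) (by omega : 3 ≤ _)).trans hupper
  omega

/-- Under the standing hypotheses, if some neighborhood subgraph G[N(t)] is disconnected,
then it has exactly two connected components. -/
theorem stmt11 {V : Type*} [Fintype V] (G : SimpleGraph V)
    (n : ℕ) (hn : 6 ≤ n) (he : Even n)
    (hcard : Fintype.card V = 5 * n / 2 - 1)
    (hW : ¬ Contains G (wheelGraph n))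
    (hS : ¬ Contains Gᶜ (_root_.starGraph n))
    (t : V) (hdis : ¬ (G.induce (G.neighborSet t)).Connected) :
    Nat.card (G.induce (G.neighborSet t)).ConnectedComponent = 2 :=
  stmt11_general G n hcard hS t hdis
end

section
/- Let G be a graph in which every vertex has degree at least d, and suppose that for every vertex t the induced subgraph G[N(t)] on the neighborhood of t is disconnected with every component having minimum degree at least c. If t has two adjacent neighbors u, v in one component of G[N(t)], then G has at least |N(t)| + 2(c+1) vertices. -/
open SimpleGraph

/-!
Since `u` and `v` are adjacent neighbours of `t`, `t` lies in `N(u)`, and as `G[N(u)]` is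
disconnected some component `C_u` of it misses `t`. No vertex of `C_u` is adjacent to `t`, nor
to `v`, which lies in the component of `t`; symmetrically for a component `C_v` of `G[N(v)]`
missing `t`. Hence `N(t)`, `C_u ⊆ N(u) \ N(v)` and `C_v ⊆ N(v)` are pairwise disjoint, and each
component has more than `c` vertices, as it contains a vertex together with its neighbours.
-/

namespace SimpleGraph

lemma exists_connectedComponent_notMem_supp {W : Type*} {H : SimpleGraph W}
    (h : ¬ H.Connected) (x : W) : ∃ C : H.ConnectedComponent, x ∉ C.supp := by
  by_contra! hx
  refine h ((connected_iff_exists_forall_reachable H).2 ⟨x, fun y => ?_⟩)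
  exact ConnectedComponent.exact (hx (H.connectedComponentMk y))

lemma ncard_neighborSet_lt_ncard_supp {W : Type*} [Finite W] {H : SimpleGraph W}
    (C : H.ConnectedComponent) {x : W} (hx : x ∈ C.supp) :
    (H.neighborSet x).ncard < C.supp.ncard := by
  have hsub : insert x (H.neighborSet x) ⊆ C.supp := by
    rintro y (rfl | hy)
    · exact hx
    · exact C.mem_supp_of_adj_mem_supp hx hy
  calc (H.neighborSet x).ncard < (insert x (H.neighborSet x)).ncard := by
        rw [Set.ncard_insert_of_notMem H.notMem_neighborSet_self]; omega
    _ ≤ C.supp.ncard := Set.ncard_le_ncard hsub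

variable {V : Type*} {G : SimpleGraph V} {s : Set V}

lemma disjoint_image_supp_neighborSet (C : (G.induce s).ConnectedComponent) {t : V}
    (ht : t ∈ s) (htC : ⟨t, ht⟩ ∉ C.supp) :
    Disjoint (Subtype.val '' C.supp) (G.neighborSet t) := by
  rw [Set.disjoint_left]
  rintro _ ⟨y, hy, rfl⟩ hty
  exact htC (C.mem_supp_of_adj_mem_supp hy (induce_adj.2 hty.symm))

lemma disjoint_image_supp_neighborSet_of_adj (C : (G.induce s).ConnectedComponent) {t v : V}
    (ht : t ∈ s) (htC : ⟨t, ht⟩ ∉ C.supp) (hv : v ∈ s) (htv : G.Adj t v) :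
    Disjoint (Subtype.val '' C.supp) (G.neighborSet v) :=
  disjoint_image_supp_neighborSet C hv fun hvC =>
    htC (C.mem_supp_of_adj_mem_supp hvC (induce_adj.2 htv.symm))

lemma add_one_le_ncard_image_supp [Finite V] {c : ℕ} (C : (G.induce s).ConnectedComponent)
    (hc : ∀ w : s, c ≤ Nat.card ((G.induce s).neighborSet w)) :
    c + 1 ≤ (Subtype.val '' C.supp).ncard := by
  obtain ⟨x, hx⟩ := C.nonempty_supp
  have hcx := hc x
  rw [Nat.card_coe_set_eq] at hcx
  rw [Set.ncard_image_of_injective _ Subtype.val_injective]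
  exact (Nat.add_le_add_right hcx 1).trans (ncard_neighborSet_lt_ncard_supp C hx)

end SimpleGraph

theorem stmt17_general {V : Type*} [Fintype V] (G : SimpleGraph V) [DecidableRel G.Adj]
    (c : ℕ)
    (hdis : ∀ t : V, ¬ (G.induce (G.neighborSet t)).Connected)
    (hc : ∀ t : V, ∀ w : G.neighborSet t,
      c ≤ Nat.card ((G.induce (G.neighborSet t)).neighborSet w))
    (t u v : V) (hu : u ∈ G.neighborSet t) (hv : v ∈ G.neighborSet t) (huv : G.Adj u v) :
    G.degree t + 2 * (c + 1) ≤ Fintype.card V := by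
  have htu : t ∈ G.neighborSet u := G.adj_symm hu
  have htv : t ∈ G.neighborSet v := G.adj_symm hv
  obtain ⟨Cu, htCu⟩ := exists_connectedComponent_notMem_supp (hdis u) ⟨t, htu⟩
  obtain ⟨Cv, htCv⟩ := exists_connectedComponent_notMem_supp (hdis v) ⟨t, htv⟩
  set Su := Subtype.val '' Cu.supp
  set Sv := Subtype.val '' Cv.supp
  have hSu_Sv : Disjoint Su Sv :=
    (disjoint_image_supp_neighborSet_of_adj Cu htu htCu huv hv).mono_right
      (Subtype.coe_image_subset _ _)
  have hNt_SuSv : Disjoint (G.neighborSet t) (Su ∪ Sv) :=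
    Set.disjoint_union_right.2 ⟨(disjoint_image_supp_neighborSet Cu htu htCu).symm,
      (disjoint_image_supp_neighborSet Cv htv htCv).symm⟩
  calc G.degree t + 2 * (c + 1)
      ≤ (G.neighborSet t).ncard + (Su.ncard + Sv.ncard) := by
        have hNt : (G.neighborSet t).ncard = G.degree t := by
          rw [← Nat.card_coe_set_eq, Nat.card_eq_fintype_card, card_neighborSet_eq_degree]
        have hSu : c + 1 ≤ Su.ncard := add_one_le_ncard_image_supp Cu (hc u)
        have hSv : c + 1 ≤ Sv.ncard := add_one_le_ncard_image_supp Cv (hc v)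
        omega
    _ = (G.neighborSet t ∪ (Su ∪ Sv)).ncard := by
        rw [Set.ncard_union_eq hNt_SuSv, Set.ncard_union_eq hSu_Sv]
    _ ≤ Fintype.card V := by
        rw [← Nat.card_eq_fintype_card]; exact Set.ncard_le_card _

/-- Counting argument of Subcase 2.1: if every vertex has degree ≥ d, every neighborhood
subgraph is disconnected with all components of minimum degree ≥ c, and some vertex t has
two adjacent neighbors u, v, then G has at least |N(t)| + 2(c+1) vertices. -/
theorem stmt17 {V : Type*} [Fintype V] (G : SimpleGraph V) [DecidableRel G.Adj]
    (d c : ℕ)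
    (hd : ∀ v : V, d ≤ G.degree v)
    (hdis : ∀ t : V, ¬ (G.induce (G.neighborSet t)).Connected)
    (hc : ∀ t : V, ∀ w : G.neighborSet t,
      c ≤ Nat.card ((G.induce (G.neighborSet t)).neighborSet w))
    (t u v : V) (hu : u ∈ G.neighborSet t) (hv : v ∈ G.neighborSet t) (huv : G.Adj u v) :
    G.degree t + 2 * (c + 1) ≤ Fintype.card V :=
  stmt17_general G c hdis hc t u v hu hv huv
end
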